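/- Let $d_1,\dots,d_N \ge 2$ be integers, $L_N = \sum_{i=1}^N d_i - N + 1$ and $D_N = d_1 d_2 \cdots d_N$. Then for every integer $c$ with $L_N \le c \le D_N$, there exists a generalized unextendible product basis of cardinality $c$ in $\mathbb{C}^{d_1} \otimes \cdots \otimes \mathbb{C}^{d_N}$, i.e., a set of $c$ linearly independent product vectors whose orthogonal complement contains no nonzero product vector. -/

import Mathlib

/-!
Following Bhat, the product vectors `u(z) = ⊗ᵢ (1, z, …, z ^ (dᵢ - 1))`, with coordinate
`z ^ ∑ᵢ xᵢ` at `x`, do all the work. For a product vector `φ = ⊗ᵢ aᵢ` one has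
`⟪u(z), φ⟫ = ∏ᵢ pᵢ(z̄)`, where `pᵢ` is the polynomial with coefficient vector `aᵢ`, of
degree at most `dᵢ - 1`. If `φ` is orthogonal to `u(z)` at `L_N = ∑ᵢ (dᵢ - 1) + 1` distinct
points, the product polynomial vanishes, so some `aᵢ = 0` and `φ = 0`. These `L_N` vectors
are linearly independent: every `s < L_N` is a coordinate sum `∑ᵢ xᵢ`, so they contain a
Vandermonde minor. Completing them by standard basis vectors, which are product vectors too,
gives linearly independent families of product vectors of every size between `L_N` and
`D_N`, and adding vectors only shrinks the orthogonal complement.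
-/

open scoped InnerProductSpace

noncomputable section

/-- The multipartite Hilbert space `ℂ^{d 0} ⊗ ⋯ ⊗ ℂ^{d (N-1)}`, realized as the
Euclidean space with orthonormal basis indexed by `(i : Fin N) → Fin (d i)`. -/
abbrev MultiSpace {N : ℕ} (d : Fin N → ℕ) : Type :=
  EuclideanSpace ℂ ((i : Fin N) → Fin (d i))

/-- A product vector `|α 0⟩ ⊗ ⋯ ⊗ |α (N-1)⟩`. -/
def IsProdVec {N : ℕ} {d : Fin N → ℕ} (v : MultiSpace d) : Prop :=
  ∃ a : (i : Fin N) → (Fin (d i) → ℂ), v = WithLp.toLp 2 (fun x => ∏ i, a i (x i))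

theorem Polynomial.eval_ofFn {R : Type*} [CommSemiring R] [DecidableEq R] (n : ℕ)
    (v : Fin n → R) (z : R) : (ofFn n v).eval z = ∑ k, v k * z ^ (k : ℕ) := by
  simp [ofFn_eq_sum_monomial, eval_finsetSum]

theorem Polynomial.natDegree_ofFn_le {R : Type*} [Semiring R] [DecidableEq R] (n : ℕ)
    (v : Fin n → R) : (ofFn n v).natDegree ≤ n - 1 :=
  natDegree_le_iff_coeff_eq_zero.mpr fun _ hk => ofFn_coeff_eq_zero_of_ge v (by omega)

theorem Fintype.exists_sum_val_eq {ι : Type*} [Fintype ι] {d : ι → ℕ}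
    (hd : ∀ i, 0 < d i) {s : ℕ} (hs : s ≤ ∑ i, (d i - 1)) :
    ∃ x : (i : ι) → Fin (d i), ∑ i, (x i : ℕ) = s := by
  classical
  induction s with
  | zero => exact ⟨fun i => ⟨0, hd i⟩, by simp⟩
  | succ s ih =>
    obtain ⟨x, hx⟩ := ih (by omega)
    obtain ⟨i, hi⟩ : ∃ i, (x i : ℕ) + 1 < d i := by
      by_contra! hmax
      have : ∑ i, (d i - 1) ≤ ∑ i, (x i : ℕ) :=
        Finset.sum_le_sum fun i _ => by have := hmax i; omega
      omega
    refine ⟨Function.update x i ⟨x i + 1, hi⟩, ?_⟩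
    have hval : ∀ j, (Function.update x i ⟨x i + 1, hi⟩ j : ℕ) =
        Function.update (fun j => (x j : ℕ)) i (x i + 1) j := fun j => by
      rcases eq_or_ne j i with rfl | hj <;> simp [*]
    rw [Finset.sum_congr rfl fun j _ => hval j, Finset.sum_update_of_mem (Finset.mem_univ i),
      ← hx, ← Finset.add_sum_erase _ _ (Finset.mem_univ i), Finset.sdiff_singleton_eq_erase]
    ring

theorem exists_linearIndependent_fin_of_subset_of_span_eq_top {K V : Type*} [DivisionRing K]
    [AddCommGroup V] [Module K V] [FiniteDimensional K V] {s t : Set V}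
    (hs : LinearIndepOn K id s) (hst : s ⊆ t) (ht : Submodule.span K t = ⊤) {c : ℕ}
    (hsc : s.ncard ≤ c) (hc : c ≤ Module.finrank K V) :
    ∃ ψ : Fin c → V, LinearIndependent K ψ ∧ s ⊆ Set.range ψ ∧ Set.range ψ ⊆ t := by
  set b := hs.extend hst
  have hb : LinearIndepOn K id b := hs.linearIndepOn_extend hst
  let B : Module.Basis b K V := .mk hb <| by
    simp [b, hs.span_extend_eq_span hst, ht]
  have hbcard : b.ncard = Module.finrank K V := by
    rw [Module.finrank_eq_nat_card_basis B, Nat.card_coe_set_eq]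
  obtain ⟨C, hsC, hCb, hCcard⟩ :=
    Set.exists_subsuperset_card_eq (hs.subset_extend hst) hsc (hbcard ▸ hc)
  have : Finite b := Module.Finite.finite_basis B
  have : Finite C := Finite.Set.subset b hCb
  let e := Finite.equivFinOfCardEq hCcard
  refine ⟨fun k => (e.symm k : V), (hb.mono hCb).comp _ e.symm.injective, fun v hv => ?_, ?_⟩
  · exact ⟨e ⟨v, hsC hv⟩, by simp⟩
  · rintro _ ⟨k, rfl⟩
    exact hs.extend_subset hst (hCb (e.symm k).2)

theorem EuclideanSpace.span_range_single_one (ι 𝕜 : Type*) [RCLike 𝕜] [Fintype ι]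
    [DecidableEq ι] :
    Submodule.span 𝕜 (Set.range fun i : ι => EuclideanSpace.single i (1 : 𝕜)) = ⊤ := by
  rw [← (EuclideanSpace.basisFun ι 𝕜).toBasis.span_eq, OrthonormalBasis.coe_toBasis]
  congr 2
  ext1 i
  rw [EuclideanSpace.basisFun_apply]

section MomentVec

variable {N : ℕ} {d : Fin N → ℕ}

def momentVec (d : Fin N → ℕ) (z : ℂ) : MultiSpace d :=
  WithLp.toLp 2 fun x => z ^ ∑ i, (x i : ℕ)

theorem isProdVec_momentVec (z : ℂ) : IsProdVec (momentVec d z) :=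
  ⟨fun _ k => z ^ (k : ℕ), by simp [momentVec, Finset.prod_pow_eq_pow_sum]⟩

theorem isProdVec_single (x : (i : Fin N) → Fin (d i)) :
    IsProdVec (EuclideanSpace.single x 1 : MultiSpace d) := by
  classical
  refine ⟨fun i k => if k = x i then 1 else 0, ?_⟩
  ext y
  by_cases hyx : y = x
  · simp [hyx]
  · obtain ⟨i, hi⟩ := Function.ne_iff.mp hyx
    rw [PiLp.single_apply, if_neg hyx, WithLp.ofLp_toLp]
    exact (Finset.prod_eq_zero (Finset.mem_univ i) (if_neg hi)).symm

open Polynomial in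
theorem inner_momentVec_prod [DecidableEq ℂ] (z : ℂ) (a : (i : Fin N) → Fin (d i) → ℂ) :
    ⟪momentVec d z, (WithLp.toLp 2 fun x => ∏ i, a i (x i) : MultiSpace d)⟫_ℂ =
      ∏ i, (ofFn (d i) (a i)).eval (starRingEnd ℂ z) := by
  simp only [PiLp.inner_apply, eval_ofFn, Finset.prod_univ_sum, Fintype.piFinset_univ, momentVec]
  refine Finset.sum_congr rfl fun x _ => ?_
  simp [Finset.prod_mul_distrib, Finset.prod_pow_eq_pow_sum]

theorem linearIndependent_momentVec (hd : ∀ i, 0 < d i) {L : ℕ} {z : Fin L → ℂ}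
    (hz : Function.Injective z) (hL : L ≤ ∑ i, (d i - 1) + 1) :
    LinearIndependent ℂ fun t => momentVec d (z t) := by
  classical
  choose x hx using fun s : Fin L => Fintype.exists_sum_val_eq hd (s := s) (by omega)
  let π : MultiSpace d →ₗ[ℂ] Fin L → ℂ :=
    LinearMap.pi fun s => (EuclideanSpace.proj (x s) : MultiSpace d →L[ℂ] ℂ).toLinearMap
  refine LinearIndependent.of_comp π ?_
  have hπ : π ∘ (fun t => momentVec d (z t)) = (Matrix.vandermonde z).row := by
    ext t s
    simp [π, momentVec, hx]
  rw [hπ, Matrix.linearIndependent_rows_iff_isUnit, Matrix.isUnit_iff_isUnit_det,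
    isUnit_iff_ne_zero, Matrix.det_vandermonde_ne_zero_iff]
  exact hz

open Polynomial in
theorem eq_zero_of_isProdVec_of_inner_momentVec_eq_zero {L : ℕ} {z : Fin L → ℂ}
    (hz : Function.Injective z) (hL : ∑ i, (d i - 1) < L) {φ : MultiSpace d}
    (hφ : IsProdVec φ) (horth : ∀ t, ⟪momentVec d (z t), φ⟫_ℂ = 0) : φ = 0 := by
  classical
  obtain ⟨a, rfl⟩ := hφ
  have hprod : ∏ i, ofFn (d i) (a i) = 0 := by
    refine eq_zero_of_natDegree_lt_card_of_eval_eq_zero _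
      ((starRingEnd ℂ).injective.comp hz) (fun t => ?_) ?_
    · rw [eval_prod, Function.comp_apply, ← inner_momentVec_prod, horth]
    · calc (∏ i, ofFn (d i) (a i)).natDegree ≤ ∑ i, (ofFn (d i) (a i)).natDegree :=
            natDegree_prod_le _ _
        _ ≤ ∑ i, (d i - 1) := Finset.sum_le_sum fun i _ => natDegree_ofFn_le _ _
        _ < Fintype.card (Fin L) := by rwa [Fintype.card_fin]
  obtain ⟨i, -, hi⟩ := Finset.prod_eq_zero_iff.mp hprod
  have hai : a i = 0 := injective_ofFn (d i) (hi.trans (map_zero _).symm)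
  ext x
  exact Finset.prod_eq_zero (Finset.mem_univ i) (congrFun hai (x i))

end MomentVec

theorem generalized_UPB_all_cardinalities_general (N : ℕ) (d : Fin N → ℕ)
    (hd : ∀ i, 2 ≤ d i) (c : ℕ)
    (hc1 : (∑ i, d i) - N + 1 ≤ c) (hc2 : c ≤ ∏ i, d i) :
    ∃ ψ : Fin c → MultiSpace d,
      LinearIndependent ℂ ψ ∧
      (∀ t, IsProdVec (ψ t)) ∧
      (∀ φ : MultiSpace d, IsProdVec φ → (∀ t, ⟪ψ t, φ⟫_ℂ = 0) → φ = 0) := by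
  have hd₀ : ∀ i, 0 < d i := fun i => by have := hd i; omega
  set L := ∑ i, (d i - 1) + 1
  have hLc : L ≤ c := by
    have : ∑ i, d i = ∑ i, (d i - 1) + N :=
      calc ∑ i, d i = ∑ i, ((d i - 1) + 1) :=
            Finset.sum_congr rfl fun i _ => (Nat.sub_add_cancel (hd₀ i)).symm
        _ = ∑ i, (d i - 1) + N := by simp [Finset.sum_add_distrib]
    omega
  have hz : Function.Injective fun t : Fin L => ((t : ℕ) : ℂ) :=
    Nat.cast_injective.comp Fin.val_injective
  have hu := linearIndependent_momentVec hd₀ hz le_rfl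
  obtain ⟨ψ, hψ, huψ, hψT⟩ := exists_linearIndependent_fin_of_subset_of_span_eq_top (c := c)
    ((linearIndepOn_id_range_iff hu.injective).mpr hu) Set.subset_union_left
    (eq_top_mono (Submodule.span_mono Set.subset_union_right)
      (EuclideanSpace.span_range_single_one _ ℂ))
    (by rwa [Set.ncard_range_of_injective hu.injective, Nat.card_fin])
    (by simpa [finrank_euclideanSpace] using hc2)
  refine ⟨ψ, hψ, fun k => ?_, fun φ hφ horth => ?_⟩
  · rcases hψT ⟨k, rfl⟩ with ⟨t, ht⟩ | ⟨x, hx⟩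
    · exact ht ▸ isProdVec_momentVec _
    · exact hx ▸ isProdVec_single x
  · refine eq_zero_of_isProdVec_of_inner_momentVec_eq_zero hz (Nat.lt_succ_self _) hφ fun t => ?_
    obtain ⟨k, hk⟩ := huψ ⟨t, rfl⟩
    rw [show momentVec d _ = ψ k from hk.symm]
    exact horth k

/-- For all `c` with `L_N = ∑ d i - N + 1 ≤ c ≤ D_N = ∏ d i`, there exists a
generalized unextendible product basis of cardinality `c`: a linearly independent
family of product vectors whose orthogonal complement contains no nonzero product
vector. -/
theorem generalized_UPB_all_cardinalities (N : ℕ) (hN : 0 < N) (d : Fin N → ℕ)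
    (hd : ∀ i, 2 ≤ d i) (c : ℕ)
    (hc1 : (∑ i, d i) - N + 1 ≤ c) (hc2 : c ≤ ∏ i, d i) :
    ∃ ψ : Fin c → MultiSpace d,
      LinearIndependent ℂ ψ ∧
      (∀ t, IsProdVec (ψ t)) ∧
      (∀ φ : MultiSpace d, IsProdVec φ → (∀ t, ⟪ψ t, φ⟫_ℂ = 0) → φ = 0) :=
  generalized_UPB_all_cardinalities_general N d hd c hc1 hc2
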